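/- arXiv:math/0001092 — 6 statements merged into one kernel-verified Lean document; each statement's English description precedes it below -/
import Mathlib

section
/- Let A be a 2-divisible abelian group and C an abelian group. For every 2-cocycle ψ : C × C → A there exists a function q : C → A such that the 2-cocycle ψ′(c₁,c₂) = ψ(c₁,c₂) + q(c₁) + q(c₂) − q(c₁+c₂) is equalized, i.e., ψ′(c,−c) = 0 for all c ∈ C. -/
/-- A 2-cocycle on `C` with values in `A` (trivial action of `C` on `A`). -/
def IsCocycle {A C : Type*} [AddCommGroup A] [AddCommGroup C] (ψ : C → C → A) : Prop :=
  ∀ c₁ c₂ c₃ : C, ψ c₁ c₂ + ψ (c₁ + c₂) c₃ = ψ c₁ (c₂ + c₃) + ψ c₂ c₃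

/-- Let `A` be a 2-divisible abelian group (the doubling map is a
bijection) and `C` an abelian group. For every 2-cocycle `ψ : C × C → A` there is a
function `q : C → A` such that the 2-cocycle
`ψ'(c₁,c₂) = ψ(c₁,c₂) + q(c₁) + q(c₂) - q(c₁+c₂)` is equalized: `ψ'(c,-c) = 0` for all `c`. -/
theorem exists_equalized_representative {A C : Type*} [AddCommGroup A] [AddCommGroup C]
    (h2 : Function.Bijective (fun a : A => a + a))
    (ψ : C → C → A) (hψ : IsCocycle ψ) :
    ∃ q : C → A,
      IsCocycle (fun c₁ c₂ => ψ c₁ c₂ + q c₁ + q c₂ - q (c₁ + c₂)) ∧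
      ∀ c : C, ψ c (-c) + q c + q (-c) - q (c + -c) = 0 := by
  set e := Equiv.ofBijective _ h2 with he
  have hg : ∀ x : A, e.symm x + e.symm x = x := fun x => e.apply_symm_apply x
  -- ψ(c,-c) is even: ψ(c,-c) = ψ(-c,c)
  have h00 : ∀ c : C, ψ c 0 = ψ 0 0 := by
    intro c
    have h := hψ c 0 0
    simpa using h
  have h0c : ∀ c : C, ψ 0 c = ψ 0 0 := by
    intro c
    have h := hψ 0 0 c
    simpa using h.symm
  have heven : ∀ c : C, ψ c (-c) = ψ (-c) c := by
    intro c
    have h := hψ c (-c) c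
    simp only [add_neg_cancel, neg_add_cancel, h00, h0c] at h
    rw [add_comm (ψ 0 0)] at h
    exact add_right_cancel h
  refine ⟨fun c => e.symm (-ψ c (-c) - ψ 0 0), ?_, ?_⟩
  · intro c₁ c₂ c₃
    have h := hψ c₁ c₂ c₃
    beta_reduce
    rw [← add_assoc c₁ c₂ c₃]
    linear_combination (norm := abel) h
  · intro c
    have key : e.symm (-ψ c (-c) - ψ 0 0) + e.symm (-ψ (-c) (- -c) - ψ 0 0)
        = -ψ c (-c) - ψ 0 0 := by
      rw [neg_neg, ← heven c]
      exact hg _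
    have q0 : e.symm (-ψ (c + -c) (-(c + -c)) - ψ 0 0) = -ψ 0 0 := by
      have : e.symm (-ψ 0 0 - ψ 0 0) + e.symm (-ψ 0 0 - ψ 0 0) = -ψ 0 0 + -ψ 0 0 := by
        rw [hg]; abel
      have h' := h2.1 (by simpa using this)
      simpa [add_neg_cancel, neg_zero] using h'
    simp only [add_neg_cancel, neg_zero] at q0 ⊢
    rw [q0]
    rw [add_assoc (ψ c (-c)), key]
    abel
end

section
/- Let ψ : C × C → A be a 2-cocycle. Then the subset A × {0} is contained in the center of the group B_ψ, and the center of B_ψ equals A × {0} if and only if ψ is non-degenerate. -/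
/-- The multiplication of `B_ψ` on the set `A × C`. -/
def Bmul {A C : Type*} [AddCommGroup A] [AddCommGroup C] (ψ : C → C → A)
    (x y : A × C) : A × C :=
  (x.1 + y.1 + ψ x.2 y.2, x.2 + y.2)

/-- A 2-cocycle `ψ` is non-degenerate iff for every `c₁ ≠ 0` there is `c₂` with
`ψ(c₁,c₂) ≠ ψ(c₂,c₁)`. -/
def NonDegenerate {A C : Type*} [AddCommGroup A] [AddCommGroup C] (ψ : C → C → A) : Prop :=
  ∀ c₁ : C, c₁ ≠ 0 → ∃ c₂ : C, ψ c₁ c₂ ≠ ψ c₂ c₁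

/-- For a 2-cocycle `ψ`, the subset `A × {0}` is contained in the center
of `B_ψ` (every `(a, 0)` commutes with everything), and the center of `B_ψ` equals
`A × {0}` (i.e. every central element has vanishing second component) iff `ψ` is
non-degenerate. -/
theorem center_eq_iff_nondegenerate {A C : Type*} [AddCommGroup A] [AddCommGroup C]
    (ψ : C → C → A) (hψ : IsCocycle ψ) :
    (∀ a : A, ∀ y : A × C, Bmul ψ (a, 0) y = Bmul ψ y (a, 0)) ∧
    ((∀ x : A × C, (∀ y : A × C, Bmul ψ x y = Bmul ψ y x) → x.2 = 0) ↔
      NonDegenerate ψ) := by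
  have h0r : ∀ c : C, ψ c 0 = ψ 0 0 := by
    intro c
    have := hψ c 0 0
    simp at this
    exact this
  have h0l : ∀ c : C, ψ 0 c = ψ 0 0 := by
    intro c
    have := hψ 0 0 c
    simp at this
    exact this.symm
  constructor
  · intro a y
    simp [Bmul, h0r, h0l]
    abel
  · constructor
    · intro h c₁ hc₁
      by_contra hcon
      push_neg at hcon
      exact hc₁ (h ((0 : A), c₁) (fun y => by
        simp [Bmul, hcon y.2, add_comm]))
    · intro hnd x hx
      by_contra hx2
      obtain ⟨c₂, hc₂⟩ := hnd x.2 hx2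
      have := hx ((0 : A), c₂)
      simp [Bmul, Prod.ext_iff] at this
      exact hc₂ this.1
end

section
/- Let A be a 2-divisible abelian group and C an abelian group. Let φ : C × C → A be a symmetric 2-cocycle (φ(c₁,c₂) = φ(c₂,c₁)) and let η : C × C → A be additive in each variable with η(c,c) = 0 for all c ∈ C. Then ψ(c₁,c₂) = φ(c₁,c₂) + η(c₁,c₂)/2 is a 2-cocycle, and it satisfies (ψ(c₁,c₂) + ψ(c₂,c₁))/2 = φ(c₁,c₂) and ψ(c₁,c₂) − ψ(c₂,c₁) = η(c₁,c₂) for all c₁,c₂ ∈ C. -/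
/-- Let `A` be 2-divisible (doubling is a bijection, with halving map
`half`), `C` abelian. Let `φ` be a symmetric 2-cocycle and `η` additive in each variable
with `η(c,c) = 0`. Then `ψ(c₁,c₂) = φ(c₁,c₂) + η(c₁,c₂)/2` is a 2-cocycle, with
`(ψ(c₁,c₂) + ψ(c₂,c₁))/2 = φ(c₁,c₂)` and `ψ(c₁,c₂) - ψ(c₂,c₁) = η(c₁,c₂)`. -/
theorem cocycle_from_symmetric_and_skew {A C : Type*} [AddCommGroup A] [AddCommGroup C]
    (half : A → A) (hbij : Function.Bijective (fun a : A => a + a))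
    (hhalf : ∀ a : A, half a + half a = a)
    (φ : C → C → A) (hφ : IsCocycle φ) (hsym : ∀ c₁ c₂ : C, φ c₁ c₂ = φ c₂ c₁)
    (η : C → C → A)
    (haddl : ∀ c₁ c₂ c₃ : C, η (c₁ + c₂) c₃ = η c₁ c₃ + η c₂ c₃)
    (haddr : ∀ c₁ c₂ c₃ : C, η c₁ (c₂ + c₃) = η c₁ c₂ + η c₁ c₃)
    (hskew : ∀ c : C, η c c = 0) :
    IsCocycle (fun c₁ c₂ => φ c₁ c₂ + half (η c₁ c₂)) ∧
    (∀ c₁ c₂ : C,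
      half ((φ c₁ c₂ + half (η c₁ c₂)) + (φ c₂ c₁ + half (η c₂ c₁))) = φ c₁ c₂) ∧
    (∀ c₁ c₂ : C,
      (φ c₁ c₂ + half (η c₁ c₂)) - (φ c₂ c₁ + half (η c₂ c₁)) = η c₁ c₂) := by
  have hinj : ∀ x y : A, x + x = y + y → x = y := fun x y h => hbij.1 h
  have huniq : ∀ a b : A, b + b = a → half a = b := fun a b h =>
    hinj _ _ (by rw [hhalf, h])
  have hadd : ∀ x y : A, half (x + y) = half x + half y := fun x y =>
    huniq _ _ (by rw [add_add_add_comm, hhalf, hhalf])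
  have hneg : ∀ x : A, half (-x) = -half x := fun x =>
    huniq _ _ (by rw [← neg_add, hhalf])
  have hanti : ∀ c₁ c₂ : C, η c₂ c₁ = -η c₁ c₂ := by
    intro c₁ c₂
    have h := hskew (c₁ + c₂)
    rw [haddl, haddr, haddr, hskew, hskew, zero_add, add_zero] at h
    exact eq_neg_of_add_eq_zero_right h
  refine ⟨?_, ?_, ?_⟩
  · intro c₁ c₂ c₃
    have h1 := hφ c₁ c₂ c₃
    have h2 : half (η c₁ c₂) + half (η (c₁ + c₂) c₃) =
        half (η c₁ (c₂ + c₃)) + half (η c₂ c₃) := by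
      rw [← hadd, ← hadd, haddl, haddr, add_assoc]
    have h3 : (φ c₁ c₂ + φ (c₁ + c₂) c₃) + (half (η c₁ c₂) + half (η (c₁ + c₂) c₃)) =
        (φ c₁ (c₂ + c₃) + φ c₂ c₃) + (half (η c₁ (c₂ + c₃)) + half (η c₂ c₃)) := by
      rw [h1, h2]
    dsimp only
    abel_nf at h3 ⊢
    exact h3
  · intro c₁ c₂
    have h : (φ c₁ c₂ + half (η c₁ c₂)) + (φ c₂ c₁ + half (η c₂ c₁)) =
        φ c₁ c₂ + φ c₁ c₂ := by
      rw [hsym c₂ c₁, hanti c₁ c₂, hneg]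
      abel
    rw [h, huniq _ _ rfl]
  · intro c₁ c₂
    rw [hsym c₂ c₁, hanti c₁ c₂, hneg]
    have h : φ c₁ c₂ + half (η c₁ c₂) - (φ c₁ c₂ + -half (η c₁ c₂)) =
        half (η c₁ c₂) + half (η c₁ c₂) := by abel
    rw [h, hhalf]
end

section
/- Let A₁, C₁, A₂, C₂ be abelian groups with A₁ and A₂ 2-divisible, let ψ₁ : C₁ × C₁ → A₁ and ψ₂ : C₂ × C₂ → A₂ be equalized 2-cocycles with ψ₂ non-degenerate, and let f : B_{ψ₁} → B_{ψ₂} be a group homomorphism. Write φᵢ(c,c′) = (ψᵢ(c,c′)+ψᵢ(c′,c))/2, ηᵢ(c,c′) = ψᵢ(c,c′) − ψᵢ(c′,c), and f(aᵢ,cᵢ) = (αᵢ,γᵢ). Then f is additive for the operations ⊞ᵢ given by (a₁,c₁) ⊞ᵢ (a₂,c₂) = (a₁+a₂+φᵢ(c₁,c₂), c₁+c₂), i.e., f((a₁,c₁) ⊞₁ (a₂,c₂)) = f(a₁,c₁) ⊞₂ f(a₂,c₂), and f preserves brackets: f(η₁(c₁,c₂), 0) = (η₂(γ₁,γ₂),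 0). -/
/-- A 2-cocycle `ψ` is equalized iff `ψ(c, -c) = 0` for all `c`. -/
def Equalized {A C : Type*} [AddCommGroup A] [AddCommGroup C] (ψ : C → C → A) : Prop :=
  ∀ c : C, ψ c (-c) = 0

/-- The skew-symmetrization `η(c₁,c₂) = ψ(c₁,c₂) - ψ(c₂,c₁)` of a 2-cocycle. -/
def eta {A C : Type*} [AddCommGroup A] [AddCommGroup C] (ψ : C → C → A)
    (c₁ c₂ : C) : A :=
  ψ c₁ c₂ - ψ c₂ c₁

/-- The addition `⊞` on `A × C` given by `φ(c₁,c₂) = (ψ(c₁,c₂)+ψ(c₂,c₁))/2`,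
where `half` is the halving map of the 2-divisible group `A`. -/
def boxAdd {A C : Type*} [AddCommGroup A] [AddCommGroup C] (half : A → A)
    (ψ : C → C → A) (x y : A × C) : A × C :=
  (x.1 + y.1 + half (ψ x.2 y.2 + ψ y.2 x.2), x.2 + y.2)

section helpers
variable {A C : Type*} [AddCommGroup A] [AddCommGroup C] {ψ : C → C → A}

lemma psi00 (heq : Equalized ψ) : ψ 0 0 = 0 := by
  have h := heq 0; rwa [neg_zero] at h

lemma psi_l (hψ : IsCocycle ψ) (heq : Equalized ψ) (c : C) : ψ 0 c = 0 := by
  have h := hψ 0 0 c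
  rw [zero_add, zero_add, psi00 heq, zero_add] at h
  exact left_eq_add.mp h

lemma psi_r (hψ : IsCocycle ψ) (heq : Equalized ψ) (c : C) : ψ c 0 = 0 := by
  have h := hψ c 0 0
  rw [add_zero, add_zero, psi00 heq, add_zero] at h
  exact add_eq_right.mp h

lemma eta_add_left (hψ : IsCocycle ψ) (a b c : C) :
    eta ψ (a + b) c = eta ψ a c + eta ψ b c := by
  have i1 := hψ a b c
  have i2 := hψ c a b
  have i3 := hψ a c b
  rw [add_comm c a] at i2
  rw [add_comm c b] at i3
  have key : eta ψ (a+b) c - (eta ψ a c + eta ψ b c)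
      = (ψ a b + ψ (a+b) c - (ψ a (b+c) + ψ b c))
        + ((ψ c a + ψ (a+c) b) - (ψ c (a+b) + ψ a b))
        - ((ψ a c + ψ (a+c) b) - (ψ a (b+c) + ψ c b)) := by
    unfold eta; abel
  rw [i1, i2, i3] at key
  simp only [sub_self, add_zero, zero_add, zero_sub, neg_zero] at key
  exact sub_eq_zero.mp key
end helpers

/-- Let `A₁, C₁, A₂, C₂` be abelian groups with `A₁, A₂` 2-divisible
(with halving maps `half₁, half₂`), let `ψ₁, ψ₂` be equalized 2-cocycles with `ψ₂`
non-degenerate, and let `f : B_{ψ₁} → B_{ψ₂}` be a group homomorphism (a multiplicative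
map). Then `f` is additive for the operations `⊞ᵢ`, and `f` preserves brackets:
`f(η₁(c₁,c₂), 0) = (η₂(γ₁,γ₂), 0)` where `γᵢ` is the second component of the image. -/
theorem hom_additive_and_bracket_preserving
    {A₁ C₁ A₂ C₂ : Type*} [AddCommGroup A₁] [AddCommGroup C₁]
    [AddCommGroup A₂] [AddCommGroup C₂]
    (half₁ : A₁ → A₁) (hbij₁ : Function.Bijective (fun a : A₁ => a + a))
    (hhalf₁ : ∀ a : A₁, half₁ a + half₁ a = a)
    (half₂ : A₂ → A₂) (hbij₂ : Function.Bijective (fun a : A₂ => a + a))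
    (hhalf₂ : ∀ a : A₂, half₂ a + half₂ a = a)
    (ψ₁ : C₁ → C₁ → A₁) (hψ₁ : IsCocycle ψ₁) (heq₁ : Equalized ψ₁)
    (ψ₂ : C₂ → C₂ → A₂) (hψ₂ : IsCocycle ψ₂) (heq₂ : Equalized ψ₂)
    (hnd₂ : NonDegenerate ψ₂)
    (f : A₁ × C₁ → A₂ × C₂)
    (hf : ∀ x y : A₁ × C₁, f (Bmul ψ₁ x y) = Bmul ψ₂ (f x) (f y)) :
    (∀ x y : A₁ × C₁,
      f (boxAdd half₁ ψ₁ x y) = boxAdd half₂ ψ₂ (f x) (f y)) ∧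
    (∀ x y : A₁ × C₁,
      f (eta ψ₁ x.2 y.2, 0) = (eta ψ₂ (f x).2 (f y).2, 0)) := by
  have hinj2 : ∀ a b : A₂, a + a = b + b → a = b := fun a b h => hbij₂.1 h
  -- Bracket preservation
  have bracket : ∀ x y : A₁ × C₁,
      f (eta ψ₁ x.2 y.2, 0) = (eta ψ₂ (f x).2 (f y).2, 0) := by
    intro x y
    have key : Bmul ψ₁ (Bmul ψ₁ y x) (eta ψ₁ x.2 y.2, 0) = Bmul ψ₁ x y := by
      unfold Bmul eta
      rw [psi_r hψ₁ heq₁]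
      refine Prod.ext ?_ ?_
      · simp only; abel
      · simp only; abel
    have h := hf (Bmul ψ₁ y x) (eta ψ₁ x.2 y.2, 0)
    rw [key, hf x y, hf y x] at h
    -- h : Bmul ψ₂ (f x) (f y) = Bmul ψ₂ (Bmul ψ₂ (f y) (f x)) (f (eta ψ₁ x.2 y.2, 0))
    have hsnd := congrArg Prod.snd h
    have hfst := congrArg Prod.fst h
    simp only [Bmul] at hsnd hfst
    -- hsnd : (f x).2 + (f y).2 = (f y).2 + (f x).2 + (f _).2
    have hd : (f (eta ψ₁ x.2 y.2, 0)).2 = 0 := by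
      rw [add_comm ((f y).2) ((f x).2)] at hsnd
      exact left_eq_add.mp hsnd
    rw [hd, psi_r hψ₂ heq₂, add_zero] at hfst
    refine Prod.ext ?_ hd
    simp only
    have h1 : (f (eta ψ₁ x.2 y.2, 0)).1
        = (f x).1 + (f y).1 + ψ₂ (f x).2 (f y).2
          - ((f y).1 + (f x).1 + ψ₂ (f y).2 (f x).2) := by
      rw [hfst]; abel
    rw [h1]; unfold eta; abel
  refine ⟨?_, bracket⟩
  intro x y
  set s := f x with hs
  set t := f y with ht
  set δ : A₁ := half₁ (ψ₁ x.2 y.2 + ψ₁ y.2 x.2) - ψ₁ x.2 y.2 with hδ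
  have hδ2 : δ + δ = eta ψ₁ y.2 x.2 := by
    have h2 := hhalf₁ (ψ₁ x.2 y.2 + ψ₁ y.2 x.2)
    rw [hδ, sub_add_sub_comm, h2]
    unfold eta; abel
  have hbox : boxAdd half₁ ψ₁ x y = Bmul ψ₁ (Bmul ψ₁ x y) (δ, 0) := by
    unfold boxAdd Bmul
    rw [psi_r hψ₁ heq₁, hδ]
    refine Prod.ext ?_ ?_
    · simp only; abel
    · simp only; rw [add_zero]
  have hsq : Bmul ψ₁ (δ, (0:C₁)) (δ, 0) = (eta ψ₁ y.2 x.2, 0) := by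
    unfold Bmul
    simp only [psi00 heq₁, add_zero, hδ2]
  have hfsq := hf (δ, (0:C₁)) (δ, 0)
  rw [hsq, bracket y x] at hfsq
  set u := f (δ, (0:C₁)) with hu
  -- hfsq : (eta ψ₂ t.2 s.2, 0) = Bmul ψ₂ u u
  have hd2 : u.2 + u.2 = 0 := by
    have := congrArg Prod.snd hfsq
    simp only [Bmul] at this
    exact this.symm
  have hd : u.2 = 0 := by
    by_contra hne
    obtain ⟨c', hc'⟩ := hnd₂ u.2 hne
    apply hc'
    have h2eta : eta ψ₂ (u.2 + u.2) c' = eta ψ₂ u.2 c' + eta ψ₂ u.2 c' :=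
      eta_add_left hψ₂ u.2 u.2 c'
    rw [hd2] at h2eta
    have hz : eta ψ₂ (0:C₂) c' = 0 := by
      unfold eta; rw [psi_l hψ₂ heq₂, psi_r hψ₂ heq₂, sub_zero]
    rw [hz] at h2eta
    have : eta ψ₂ u.2 c' = 0 := hinj2 _ 0 (by rw [add_zero]; exact h2eta.symm)
    unfold eta at this
    exact sub_eq_zero.mp this
  have he : u.1 + u.1 = eta ψ₂ t.2 s.2 := by
    have := congrArg Prod.fst hfsq
    simp only [Bmul, hd, psi00 heq₂, add_zero] at this
    exact this.symm
  -- final assembly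
  have hmain := hf (Bmul ψ₁ x y) (δ, 0)
  rw [← hbox, hf x y, ← hs, ← ht, ← hu] at hmain
  rw [hmain]
  unfold Bmul boxAdd
  refine Prod.ext ?_ ?_
  · simp only [hd, psi_r hψ₂ heq₂, add_zero]
    have key : ψ₂ s.2 t.2 + u.1 = half₂ (ψ₂ s.2 t.2 + ψ₂ t.2 s.2) := by
      apply hinj2
      rw [hhalf₂]
      calc ψ₂ s.2 t.2 + u.1 + (ψ₂ s.2 t.2 + u.1)
          = (u.1 + u.1) + (ψ₂ s.2 t.2 + ψ₂ s.2 t.2) := by abel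
        _ = (ψ₂ t.2 s.2 - ψ₂ s.2 t.2) + (ψ₂ s.2 t.2 + ψ₂ s.2 t.2) := by
            rw [he]; rfl
        _ = ψ₂ s.2 t.2 + ψ₂ t.2 s.2 := by abel
    rw [← key]; abel
  · simp only [hd, add_zero]
end

section
/- Let G be a finite group and M a finite additive abelian group on which G acts by additive automorphisms. Let M* be the group of characters of M, i.e., group homomorphisms from M to the multiplicative group ℂˣ, with the dual G-action defined by (g•χ)(m) = χ(g⁻¹•m). Then the number of G-orbits in M* equals the number of G-orbits in M. -/
/-!
By Burnside's lemma it suffices that every `g : G` fixes as many characters as elements of `M`.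
A character is fixed by `g` iff it vanishes on the image of `g - 1`, so the fixed characters are
the characters of `M ⧸ (g - 1) M`, of which there are `|M ⧸ (g - 1) M| = |ker (g - 1)| = |M^g|`.
-/

open MulAction

namespace MulAction

theorem card_quot_exists_smul_eq (G X : Type*) [Group G] [MulAction G X] :
    Nat.card (Quot fun a b : X => ∃ g : G, g • a = b) = Nat.card (orbitRel.Quotient G X) :=
  Nat.card_congr <| Quot.congr (Equiv.refl X) fun _ _ => mem_orbit_symm.symm

theorem card_orbitRel_quotient_eq_of_card_fixedBy_eq {G H X Y : Type*} [Group G] [Group H]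
    [Finite G] [MulAction G X] [MulAction H Y] [Finite X] [Finite Y] (e : G ≃ H)
    (he : ∀ g, Nat.card (fixedBy X g) = Nat.card (fixedBy Y (e g))) :
    Nat.card (orbitRel.Quotient G X) = Nat.card (orbitRel.Quotient H Y) := by
  classical
  have : Fintype G := Fintype.ofFinite G
  have : Fintype H := Fintype.ofEquiv G e
  have : Fintype (orbitRel.Quotient G X) := Fintype.ofFinite _
  have : Fintype (orbitRel.Quotient H Y) := Fintype.ofFinite _
  have : ∀ g : G, Fintype (fixedBy X g) := fun _ => Fintype.ofFinite _
  have : ∀ h : H, Fintype (fixedBy Y h) := fun _ => Fintype.ofFinite _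
  have hsum : ∑ g : G, Fintype.card (fixedBy X g) = ∑ h : H, Fintype.card (fixedBy Y h) :=
    Fintype.sum_equiv e _ _ fun g => by simpa only [Nat.card_eq_fintype_card] using he g
  rw [sum_card_fixedBy_eq_card_orbits_mul_card_group,
    sum_card_fixedBy_eq_card_orbits_mul_card_group, Fintype.card_congr e] at hsum
  simpa only [Nat.card_eq_fintype_card] using Nat.eq_of_mul_eq_mul_right Fintype.card_pos hsum

end MulAction

section Characters

variable (F : Type*) [Field F] [IsAlgClosed F] [CharZero F] {Q : Type*} [AddCommGroup Q] [Finite Q]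

theorem card_addMonoidHom_additiveUnits : Nat.card (Q →+ Additive Fˣ) = Nat.card Q := by
  have : NeZero (Monoid.exponent (Multiplicative Q)) := ⟨Monoid.exponent_ne_zero_of_finite⟩
  rw [Nat.card_congr AddMonoidHom.toMultiplicativeLeft,
    CommGroup.card_monoidHom_of_hasEnoughRootsOfUnity]
  rfl

theorem finite_addMonoidHom_additiveUnits : Finite (Q →+ Additive Fˣ) :=
  Nat.finite_of_card_ne_zero <| by
    rw [card_addMonoidHom_additiveUnits]
    exact Nat.card_pos.ne'

theorem card_addMonoidHom_additiveUnits_vanishing (H : AddSubgroup Q) :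
    Nat.card {χ : Q →+ Additive Fˣ // ∀ x ∈ H, χ x = 0} = H.index := by
  have e : {χ : Q →+ Additive Fˣ // ∀ x ∈ H, χ x = 0} ≃
      (AddMonoidHom.domRestrictHom H (Additive Fˣ)).ker :=
    Equiv.subtypeEquivRight fun χ => by
      rw [AddMonoidHom.mem_ker, AddMonoidHom.domRestrictHom_apply,
        AddMonoidHom.domRestrict_eq_zero_iff]
  rw [Nat.card_congr (e.trans (AddMonoidHom.domRestrictHomKerEquiv _ H).toEquiv),
    card_addMonoidHom_additiveUnits, AddSubgroup.index_eq_card]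

theorem card_addMonoidHom_additiveUnits_comp_eq_self (f : Q →+ Q) :
    Nat.card {χ : Q →+ Additive Fˣ // χ.comp f = χ} = Nat.card {q : Q // f q = q} := by
  have hfixed (χ : Q →+ Additive Fˣ) :
      χ.comp f = χ ↔ ∀ x ∈ (f - AddMonoidHom.id Q).range, χ x = 0 := by
    simp only [AddMonoidHom.ext_iff, AddMonoidHom.mem_range, forall_exists_index,
      forall_apply_eq_imp_iff, AddMonoidHom.comp_apply, AddMonoidHom.sub_apply,
      AddMonoidHom.id_apply, map_sub, sub_eq_zero]
  rw [Nat.card_congr (Equiv.subtypeEquivRight hfixed), card_addMonoidHom_additiveUnits_vanishing,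
    AddSubgroup.index_range]
  exact Nat.card_congr <| Equiv.subtypeEquivRight fun q => by
    simp only [AddMonoidHom.mem_ker, AddMonoidHom.sub_apply, AddMonoidHom.id_apply, sub_eq_zero]

end Characters

def subtypeMapAddEquivAddMonoidHom (M A : Type*) [AddGroup M] [Group A] :
    {χ : M → A // ∀ x y : M, χ (x + y) = χ x * χ y} ≃ (M →+ Additive A) where
  toFun χ := AddMonoidHom.mk' (fun m => Additive.ofMul (χ.1 m)) fun x y => congrArg _ (χ.2 x y)
  invFun f := ⟨fun m => (f m).toMul, fun x y => congrArg Additive.toMul (map_add f x y)⟩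

/-- The dual action `χ ↦ χ ∘ (g⁻¹ • ·)` is the action of `DomMulAct.mk g⁻¹`. -/
theorem card_quot_characters_eq_card_orbitRel_quotient_domMulAct {G M A : Type*} [Group G]
    [AddGroup M] [DistribMulAction G M] [Group A] :
    Nat.card (Quot (fun χ₁ χ₂ : {χ : M → A // ∀ x y : M, χ (x + y) = χ x * χ y} =>
        ∃ g : G, ∀ m : M, χ₂.1 m = χ₁.1 (g⁻¹ • m))) =
      Nat.card (orbitRel.Quotient Gᵈᵐᵃ (M →+ Additive A)) := by
  rw [← card_quot_exists_smul_eq]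
  refine Nat.card_congr <| Quot.congr (subtypeMapAddEquivAddMonoidHom M A) fun χ₁ χ₂ => ?_
  constructor
  · rintro ⟨g, hg⟩
    exact ⟨DomMulAct.mk g⁻¹, AddMonoidHom.ext fun m => congrArg Additive.ofMul (hg m).symm⟩
  · rintro ⟨d, hd⟩
    refine ⟨(DomMulAct.mk.symm d)⁻¹, fun m => ?_⟩
    rw [inv_inv]
    exact congrArg Additive.toMul (DFunLike.congr_fun hd m).symm

/-- **Duality Lemma.** Let `G` be a finite group and `M` a finite additive
abelian group on which `G` acts by additive automorphisms. Let `M*` be the group of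
characters of `M` (group homomorphisms `M → ℂˣ`), with the dual `G`-action
`(g • χ)(m) = χ(g⁻¹ • m)`. Then the number of `G`-orbits in `M*` equals the number of
`G`-orbits in `M`. -/
theorem card_orbits_dual_eq (G M : Type*) [Group G] [Fintype G]
    [AddCommGroup M] [Fintype M] [DistribMulAction G M] :
    Nat.card (Quot (fun χ₁ χ₂ : {χ : M → ℂˣ // ∀ x y : M, χ (x + y) = χ x * χ y} =>
        ∃ g : G, ∀ m : M, χ₂.1 m = χ₁.1 (g⁻¹ • m))) =
      Nat.card (Quot (fun m₁ m₂ : M => ∃ g : G, g • m₁ = m₂)) := by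
  have := finite_addMonoidHom_additiveUnits ℂ (Q := M)
  rw [card_quot_characters_eq_card_orbitRel_quotient_domMulAct, card_quot_exists_smul_eq]
  refine (card_orbitRel_quotient_eq_of_card_fixedBy_eq DomMulAct.mk fun g => ?_).symm
  exact (card_addMonoidHom_additiveUnits_comp_eq_self ℂ (DistribSMul.toAddMonoidHom M g)).symm
end

section
/- Let A and C be finite abelian groups of odd order and ψ : C × C → A an equalized 2-cocycle. Let Ω be a coadjoint orbit and χ ∈ Ω. For every b ∈ B_ψ, the subspace V_Ω is invariant under the right regular action R(b) : x ↦ x·b⁻¹ of ℂ[B_ψ], and the trace of the ℂ-linear endomorphism R(b) restricted to V_Ω equals (#Ω)·χ(b) if b ∈ Stab(χ), and equals 0 if b ∉ Stab(χ). -/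
/-- A character of `(A × C, ⊞)`: a map `χ : A × C → ℂˣ` with `χ(x ⊞ y) = χ(x)·χ(y)`. -/
def IsChar {A C : Type*} [AddCommGroup A] [AddCommGroup C] (half : A → A)
    (ψ : C → C → A) (χ : A × C → ℂˣ) : Prop :=
  ∀ x y : A × C, χ (boxAdd half ψ x y) = χ x * χ y

/-- The coadjoint action of `b ∈ B_ψ` on characters: `(b • χ)(a,c) = χ(a - η(c_b,c), c)`. -/
def coact {A C : Type*} [AddCommGroup A] [AddCommGroup C] (ψ : C → C → A)
    (b : A × C) (χ : A × C → ℂˣ) : A × C → ℂˣ :=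
  fun x => χ (x.1 - eta ψ b.2 x.2, x.2)

/-- A coadjoint orbit: the orbit of some character `χ₀` under the coadjoint action. -/
def IsCoadjointOrbit {A C : Type*} [AddCommGroup A] [AddCommGroup C] (half : A → A)
    (ψ : C → C → A) (Ω : Set (A × C → ℂˣ)) : Prop :=
  ∃ χ₀ : A × C → ℂˣ, IsChar half ψ χ₀ ∧
    Ω = {χ : A × C → ℂˣ | ∃ b : A × C, χ = coact ψ b χ₀}

/-- The element `X_χ = ∑_{x ∈ A × C} χ(x)·x` of the group algebra `ℂ[B_ψ]`,
where `B_ψ` is `A × C` endowed with a group structure. -/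
noncomputable def Xelem {A C : Type*} [AddCommGroup A] [AddCommGroup C]
    [Fintype A] [Fintype C] [Group (A × C)] (χ : A × C → ℂˣ) :
    MonoidAlgebra ℂ (A × C) :=
  ∑ x : A × C, MonoidAlgebra.single x (χ x : ℂ)

/-- The subspace `V_Ω = span_ℂ {X_χ : χ ∈ Ω}` of `ℂ[B_ψ]`. -/
noncomputable def Vorb {A C : Type*} [AddCommGroup A] [AddCommGroup C]
    [Fintype A] [Fintype C] [Group (A × C)] (Ω : Set (A × C → ℂˣ)) :
    Submodule ℂ (MonoidAlgebra ℂ (A × C)) :=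
  Submodule.span ℂ (Xelem '' Ω)

/-!
The group law of `B_ψ` is `⊞` twisted by half of `η`: if `c' + c' = c_b` (which exists since `#C`
is odd), then `y * b = (y.1 + η(y.2, c'), y.2) ⊞ b`. Hence `X_χ · b⁻¹ = χ(b) · X_{(0,c') • χ}`. The
`X_χ` for `χ ∈ Ω` are distinct characters of `(A × C, ⊞)`, so they are linearly independent
(Dedekind), and on this basis of `V_Ω` the map `R(b)` is a weighted permutation: its trace is the
sum of `χ'(b)` over the fixed points `χ'` of `(0, c')`.

The coadjoint action factors through the abelian group `C`, so all points of `Ω` have the same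
stabilizer. If `b` fixes `χ`, then `(0, c')` fixes every `χ' ∈ Ω` (halving once more in `C`) and
`χ'(b) = χ(b)`; otherwise `(0, c')` fixes nothing, because its square acts as `b`.
-/

section

open Finset

theorem exists_add_self_eq_of_odd_card {G : Type*} [AddGroup G] [Fintype G]
    (h : Odd (Fintype.card G)) (g : G) : ∃ d, d + d = g := by
  have hcop : (Nat.card G).Coprime 2 := by rwa [Nat.card_eq_fintype_card, Nat.coprime_two_right]
  obtain ⟨d, hd⟩ := (nsmulCoprime hcop).surjective g
  exact ⟨d, by rwa [nsmulCoprime_apply, two_nsmul] at hd⟩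

theorem LinearMap.trace_eq_sum_fixedPoints {R M ι : Type*} [CommRing R] [AddCommGroup M]
    [Module R M] [Fintype ι] [DecidableEq ι] (e : Module.Basis ι R M) {f : M →ₗ[R] M}
    (σ : ι → ι) (w : ι → R) (hf : ∀ i, f (e i) = w i • e (σ i)) :
    trace R M f = ∑ i with σ i = i, w i := by
  rw [trace_eq_matrix_trace R e, Matrix.trace, sum_filter]
  refine sum_congr rfl fun i _ => ?_
  simp [LinearMap.toMatrix_apply, hf, Finsupp.single_apply]

variable {A C : Type*} [AddCommGroup A] [AddCommGroup C] {ψ : C → C → A} {half : A → A}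

theorem injective_add_self_of_halving [Finite A] (hhalf : ∀ a : A, half a + half a = a) :
    Function.Injective fun a : A => a + a :=
  Finite.injective_iff_surjective.mpr fun a => ⟨half a, hhalf a⟩

theorem half_zero [Finite A] (hhalf : ∀ a : A, half a + half a = a) : half 0 = 0 :=
  injective_add_self_of_halving hhalf (by simp only [hhalf, add_zero])

theorem eta_swap (c d : C) : eta ψ c d = -eta ψ d c := by
  simp only [eta, neg_sub]

namespace IsCocycle

variable (hψ : IsCocycle ψ)
include hψ

theorem apply_zero_right (heq : Equalized ψ) (c : C) : ψ c 0 = 0 := by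
  have h := hψ c 0 0
  simp only [add_zero, add_right_inj] at h
  simpa [h] using heq 0

theorem apply_zero_left (heq : Equalized ψ) (c : C) : ψ 0 c = 0 := by
  have h := hψ 0 0 c
  simp only [add_zero, zero_add, add_left_inj] at h
  simpa [← h] using heq 0

theorem eta_add_left (c d e : C) : eta ψ (c + d) e = eta ψ c e + eta ψ d e := by
  have h₁ := hψ c d e
  have h₂ := hψ e c d
  have h₃ := hψ c e d
  rw [add_comm e c] at h₂
  rw [add_comm e d] at h₃
  simp only [eta]
  linear_combination (norm := abel) h₁ + h₂ - h₃

theorem eta_add_right (c d e : C) : eta ψ c (d + e) = eta ψ c d + eta ψ c e := by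
  rw [eta_swap, hψ.eta_add_left, eta_swap d, eta_swap e]
  abel

end IsCocycle

theorem coact_coact (hψ : IsCocycle ψ) (g h : A × C) (χ : A × C → ℂˣ) :
    coact ψ g (coact ψ h χ) = coact ψ (g + h) χ := by
  funext x
  simp only [coact, Prod.snd_add, hψ.eta_add_left, sub_add_eq_sub_sub]

theorem coact_comm (hψ : IsCocycle ψ) (g h : A × C) (χ : A × C → ℂˣ) :
    coact ψ g (coact ψ h χ) = coact ψ h (coact ψ g χ) := by
  rw [coact_coact hψ, coact_coact hψ, add_comm]

theorem isChar_coact (hψ : IsCocycle ψ) {χ : A × C → ℂˣ} (hch : IsChar half ψ χ) (g : A × C) :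
    IsChar half ψ (coact ψ g χ) := by
  intro x y
  simp only [coact]
  rw [← hch]
  simp only [boxAdd, hψ.eta_add_right]
  congr 2
  abel

namespace IsChar

variable [Finite A] (hψ : IsCocycle ψ) (heq : Equalized ψ) (hhalf : ∀ a : A, half a + half a = a)
  {χ : A × C → ℂˣ} (hch : IsChar half ψ χ)
include hψ heq hhalf hch

theorem apply_add_fst (a t : A) (c : C) : χ (a + t, c) = χ (a, c) * χ (t, 0) := by
  simpa [boxAdd, hψ.apply_zero_right heq, hψ.apply_zero_left heq, half_zero hhalf]
    using hch (a, c) (t, 0)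

theorem apply_zero : χ 0 = 1 := by
  have h := hch.apply_add_fst hψ heq hhalf 0 0 0
  rwa [add_zero, left_eq_mul] at h

theorem coact_apply (g x : A × C) : coact ψ g χ x = χ x * χ (eta ψ x.2 g.2, 0) := by
  rw [coact, sub_eq_add_neg, ← eta_swap, hch.apply_add_fst hψ heq hhalf]

theorem coact_eq_self_iff (g : A × C) :
    coact ψ g χ = χ ↔ ∀ c, χ (eta ψ c g.2, 0) = 1 := by
  refine ⟨fun hfix c => ?_, fun h => funext fun x => ?_⟩
  · have h := congrFun hfix (0, c)
    rwa [hch.coact_apply hψ heq hhalf, mul_eq_left] at h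
  · rw [hch.coact_apply hψ heq hhalf, h, mul_one]

theorem coact_eq_self_iff_of_add_self_eq (hC : ∀ c : C, ∃ d, d + d = c) {b : A × C} {c' : C}
    (hc' : c' + c' = b.2) : coact ψ (0, c') χ = χ ↔ coact ψ b χ = χ := by
  simp only [hch.coact_eq_self_iff hψ heq hhalf]
  refine ⟨fun h c => ?_, fun h c => ?_⟩
  · rw [← hc', hψ.eta_add_right, hch.apply_add_fst hψ heq hhalf, h, mul_one]
  · obtain ⟨d, rfl⟩ := hC c
    rw [hψ.eta_add_left, ← hψ.eta_add_right, hc']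
    exact h d

theorem coact_apply_of_coact_eq_self {b : A × C} (hfix : coact ψ b χ = χ) (g : A × C) :
    coact ψ g χ b = χ b := by
  rw [hch.coact_eq_self_iff hψ heq hhalf] at hfix
  have hswap : χ (eta ψ b.2 g.2, 0) = 1 := by
    calc χ (eta ψ b.2 g.2, 0) = χ (eta ψ b.2 g.2, 0) * χ (eta ψ g.2 b.2, 0) := by
          rw [hfix, mul_one]
      _ = χ 0 := by
          rw [← hch.apply_add_fst hψ heq hhalf, eta_swap b.2, neg_add_cancel]; rfl
      _ = 1 := hch.apply_zero hψ heq hhalf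
  rw [hch.coact_apply hψ heq hhalf, hswap, mul_one]

end IsChar

theorem linearIndependent_isChar [Finite A] (hψ : IsCocycle ψ) (heq : Equalized ψ)
    (hhalf : ∀ a : A, half a + half a = a) {ι : Type*} {χs : ι → A × C → ℂˣ}
    (hχs : ∀ i, IsChar half ψ (χs i)) (hinj : Function.Injective χs) :
    LinearIndependent ℂ fun i x => (χs i x : ℂ) := by
  -- `⊞` with neutral element `0` is a `MulOneClass`, and Dedekind's lemma needs nothing more
  let _ : MulOneClass (A × C) :=
    { mul := boxAdd half ψ
      one := 0
      one_mul := fun x => show boxAdd half ψ 0 x = x by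
        simp [boxAdd, hψ.apply_zero_right heq, hψ.apply_zero_left heq, half_zero hhalf]
      mul_one := fun x => show boxAdd half ψ x 0 = x by
        simp [boxAdd, hψ.apply_zero_right heq, hψ.apply_zero_left heq, half_zero hhalf] }
  let hom : ι → A × C →* ℂ := fun i =>
    { toFun := fun x => χs i x
      map_one' := show ((χs i 0 : ℂˣ) : ℂ) = 1 by rw [(hχs i).apply_zero hψ heq hhalf, Units.val_one]
      map_mul' := fun x y => by simp only [← Units.val_mul, ← hχs i x y]; rfl }
  have hom_inj : Function.Injective hom := fun i j hij =>
    hinj <| funext fun x => Units.ext (DFunLike.congr_fun hij x)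
  exact (linearIndependent_monoidHom (A × C) ℂ).comp hom hom_inj

namespace IsCoadjointOrbit

variable {Ω : Set (A × C → ℂˣ)} (hΩ : IsCoadjointOrbit half ψ Ω)
include hΩ

theorem finite [Finite A] [Finite C] : Ω.Finite := by
  obtain ⟨χ₀, -, rfl⟩ := hΩ
  exact (Set.finite_range fun g => coact ψ g χ₀).subset fun χ ⟨g, hg⟩ => ⟨g, hg.symm⟩

variable (hψ : IsCocycle ψ)
include hψ

theorem isChar {χ : A × C → ℂˣ} (hχ : χ ∈ Ω) : IsChar half ψ χ := by
  obtain ⟨χ₀, hχ₀, rfl⟩ := hΩ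
  obtain ⟨g, rfl⟩ := hχ
  exact isChar_coact hψ hχ₀ g

theorem coact_mem {χ : A × C → ℂˣ} (hχ : χ ∈ Ω) (g : A × C) : coact ψ g χ ∈ Ω := by
  obtain ⟨χ₀, -, rfl⟩ := hΩ
  obtain ⟨h, rfl⟩ := hχ
  exact ⟨g + h, coact_coact hψ g h χ₀⟩

theorem exists_coact_eq {χ χ' : A × C → ℂˣ} (hχ : χ ∈ Ω) (hχ' : χ' ∈ Ω) :
    ∃ g, χ' = coact ψ g χ := by
  obtain ⟨χ₀, -, rfl⟩ := hΩ
  obtain ⟨h, rfl⟩ := hχ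
  obtain ⟨h', rfl⟩ := hχ'
  exact ⟨h' - h, by rw [coact_coact hψ, sub_add_cancel]⟩

theorem coact_eq_self_of_mem {χ χ' : A × C → ℂˣ} (hχ : χ ∈ Ω) (hχ' : χ' ∈ Ω) {b : A × C}
    (hfix : coact ψ b χ = χ) : coact ψ b χ' = χ' := by
  obtain ⟨g, rfl⟩ := hΩ.exists_coact_eq hψ hχ hχ'
  rw [coact_comm hψ, hfix]

end IsCoadjointOrbit

theorem mul_eq_boxAdd [Finite A] [Group (A × C)]
    (hmul : ∀ x y : A × C, x * y = (x.1 + y.1 + ψ x.2 y.2, x.2 + y.2)) (hψ : IsCocycle ψ)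
    (hhalf : ∀ a : A, half a + half a = a) {b : A × C} {c' : C} (hc' : c' + c' = b.2)
    (y : A × C) : y * b = boxAdd half ψ (y.1 + eta ψ y.2 c', y.2) b := by
  rw [hmul, boxAdd]
  congr 1
  apply injective_add_self_of_halving hhalf
  have hη : eta ψ y.2 c' + eta ψ y.2 c' = eta ψ y.2 b.2 := by rw [← hψ.eta_add_right, hc']
  have hφ := hhalf (ψ y.2 b.2 + ψ b.2 y.2)
  simp only [eta] at hη ⊢
  linear_combination (norm := abel) -hφ - hη

section GroupAlgebra

variable [Fintype A] [Fintype C] [Group (A × C)]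

theorem coeff_Xelem (χ : A × C → ℂˣ) (x : A × C) : (Xelem χ).coeff x = χ x := by
  classical
  simp [Xelem, MonoidAlgebra.coeff_sum, Finsupp.single_apply]

theorem Xelem_mul_single_inv {χ χ' : A × C → ℂˣ} {b : A × C} {z : ℂ}
    (h : ∀ y, (χ (y * b) : ℂ) = z * χ' y) :
    Xelem χ * MonoidAlgebra.single b⁻¹ 1 = z • Xelem χ' := by
  ext y
  simp [coeff_Xelem, h]

theorem linearIndependent_Xelem (hψ : IsCocycle ψ) (heq : Equalized ψ)
    (hhalf : ∀ a : A, half a + half a = a) {ι : Type*} {χs : ι → A × C → ℂˣ}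
    (hχs : ∀ i, IsChar half ψ (χs i)) (hinj : Function.Injective χs) :
    LinearIndependent ℂ (Xelem ∘ χs) := by
  let coeffs : MonoidAlgebra ℂ (A × C) →ₗ[ℂ] A × C → ℂ :=
    Finsupp.lcoeFun ∘ₗ (MonoidAlgebra.coeffLinearEquiv ℂ).toLinearMap
  refine LinearIndependent.of_comp coeffs ?_
  convert linearIndependent_isChar hψ heq hhalf hχs hinj with i x
  exact coeff_Xelem (χs i) x

variable (hmul : ∀ x y : A × C, x * y = (x.1 + y.1 + ψ x.2 y.2, x.2 + y.2))
  (hψ : IsCocycle ψ) (heq : Equalized ψ) (hhalf : ∀ a : A, half a + half a = a)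
  {b : A × C} {c' : C} (hc' : c' + c' = b.2)
include hmul hψ heq hhalf hc'

theorem IsChar.Xelem_mul_single_inv {χ : A × C → ℂˣ} (hch : IsChar half ψ χ) :
    Xelem χ * MonoidAlgebra.single b⁻¹ 1 = (χ b : ℂ) • Xelem (coact ψ (0, c') χ) := by
  refine _root_.Xelem_mul_single_inv fun y => ?_
  rw [mul_eq_boxAdd hmul hψ hhalf hc', hch, hch.apply_add_fst hψ heq hhalf,
    hch.coact_apply hψ heq hhalf]
  push_cast
  ring

end GroupAlgebra

namespace IsCoadjointOrbit

variable [Fintype A] [Fintype C] [Group (A × C)] {Ω : Set (A × C → ℂˣ)}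
  (hΩ : IsCoadjointOrbit half ψ Ω)
  (hmul : ∀ x y : A × C, x * y = (x.1 + y.1 + ψ x.2 y.2, x.2 + y.2))
  (hψ : IsCocycle ψ) (heq : Equalized ψ) (hhalf : ∀ a : A, half a + half a = a)
  {b : A × C} {c' : C} (hc' : c' + c' = b.2)
include hΩ hmul hψ heq hhalf hc'

theorem Vorb_le_comap_mulRight :
    Vorb Ω ≤ (Vorb Ω).comap (LinearMap.mulRight ℂ (MonoidAlgebra.single b⁻¹ (1 : ℂ))) := by
  refine Submodule.span_le.mpr ?_
  rintro _ ⟨χ, hχ, rfl⟩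
  rw [SetLike.mem_coe, Submodule.mem_comap, LinearMap.mulRight_apply,
    (hΩ.isChar hψ hχ).Xelem_mul_single_inv hmul hψ heq hhalf hc']
  exact Submodule.smul_mem _ _ (Submodule.subset_span ⟨_, hΩ.coact_mem hψ hχ _, rfl⟩)

open Classical in
theorem trace_restrict_mulRight [Fintype Ω]
    (hb : ∀ x ∈ Vorb Ω, LinearMap.mulRight ℂ (MonoidAlgebra.single b⁻¹ (1 : ℂ)) x ∈ Vorb Ω) :
    LinearMap.trace ℂ (Vorb Ω)
        ((LinearMap.mulRight ℂ (MonoidAlgebra.single b⁻¹ (1 : ℂ))).restrict hb) =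
      ∑ χ ∈ univ.filter fun χ : Ω => coact ψ (0, c') χ.1 = χ.1, (χ.1 b : ℂ) := by
  have hspan : Submodule.span ℂ (Set.range fun χ : Ω => Xelem χ.1) = Vorb Ω := by
    rw [Vorb, Set.image_eq_range]
  let basis : Module.Basis Ω ℂ (Vorb Ω) :=
    (Module.Basis.span (linearIndependent_Xelem hψ heq hhalf (fun χ : Ω => hΩ.isChar hψ χ.2)
      Subtype.val_injective)).map (LinearEquiv.ofEq _ _ hspan)
  have hbasis (χ : Ω) : (basis χ : MonoidAlgebra ℂ (A × C)) = Xelem χ.1 := by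
    simp [basis, Module.Basis.span_apply]
  rw [LinearMap.trace_eq_sum_fixedPoints basis (fun χ => ⟨_, hΩ.coact_mem hψ χ.2 (0, c')⟩)
    (fun χ => (χ.1 b : ℂ)) fun χ => Subtype.ext ?_]
  · simp only [Subtype.ext_iff]
  · rw [LinearMap.coe_restrict_apply, LinearMap.mulRight_apply, hbasis,
      (hΩ.isChar hψ χ.2).Xelem_mul_single_inv hmul hψ heq hhalf hc', Submodule.coe_smul, hbasis]

end IsCoadjointOrbit

end

theorem character_formula_general {A C : Type*} [AddCommGroup A] [AddCommGroup C]
    [Fintype A] [Fintype C] [Group (A × C)]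
    (hC : Odd (Fintype.card C))
    (half : A → A) (hhalf : ∀ a : A, half a + half a = a)
    (ψ : C → C → A) (hψ : IsCocycle ψ) (heq : Equalized ψ)
    (hmul : ∀ x y : A × C, x * y = (x.1 + y.1 + ψ x.2 y.2, x.2 + y.2))
    (Ω : Set (A × C → ℂˣ)) (hΩ : IsCoadjointOrbit half ψ Ω)
    (χ : A × C → ℂˣ) (hχ : χ ∈ Ω) (b : A × C) :
    ∃ hb : ∀ x ∈ Vorb Ω,
        (LinearMap.mulRight ℂ (MonoidAlgebra.single b⁻¹ (1 : ℂ))) x ∈ Vorb Ω,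
      (coact ψ b χ = χ →
        LinearMap.trace ℂ (Vorb Ω)
            ((LinearMap.mulRight ℂ (MonoidAlgebra.single b⁻¹ (1 : ℂ))).restrict hb) =
          (Nat.card Ω : ℂ) * (χ b : ℂ)) ∧
      (coact ψ b χ ≠ χ →
        LinearMap.trace ℂ (Vorb Ω)
            ((LinearMap.mulRight ℂ (MonoidAlgebra.single b⁻¹ (1 : ℂ))).restrict hb) =
          0) := by
  have := hΩ.finite.fintype
  obtain ⟨c', hc'⟩ := exists_add_self_eq_of_odd_card hC b.2
  have hfix_iff (χ' : Ω) := (hΩ.isChar hψ χ'.2).coact_eq_self_iff_of_add_self_eq hψ heq hhalf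
    (exists_add_self_eq_of_odd_card hC) hc'
  have hb := hΩ.Vorb_le_comap_mulRight hmul hψ heq hhalf hc'
  refine ⟨hb, fun hfix => ?_, fun hnfix => ?_⟩ <;>
    rw [hΩ.trace_restrict_mulRight hmul hψ heq hhalf hc']
  · rw [Finset.filter_true_of_mem fun χ' _ =>
      (hfix_iff χ').mpr (hΩ.coact_eq_self_of_mem hψ hχ χ'.2 hfix)]
    have hval (χ' : Ω) : (χ'.1 b : ℂ) = χ b := by
      obtain ⟨g, hg⟩ := hΩ.exists_coact_eq hψ hχ χ'.2
      rw [hg, (hΩ.isChar hψ hχ).coact_apply_of_coact_eq_self hψ heq hhalf hfix]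
    rw [Finset.sum_congr rfl fun χ' _ => hval χ', Finset.sum_const, Finset.card_univ, nsmul_eq_mul,
      Nat.card_eq_fintype_card]
  · rw [Finset.filter_false_of_mem, Finset.sum_empty]
    exact fun χ' _ hσ => hnfix (hΩ.coact_eq_self_of_mem hψ χ'.2 hχ ((hfix_iff χ').mp hσ))

/-- **Character formula.** Let `A` and `C` be finite abelian groups of odd
order and `ψ` an equalized 2-cocycle, with `B_ψ` the group `A × C` with multiplication
`(a₁,c₁)·(a₂,c₂) = (a₁+a₂+ψ(c₁,c₂), c₁+c₂)`. Let `Ω` be a coadjoint orbit and `χ ∈ Ω`.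
For every `b ∈ B_ψ`, the subspace `V_Ω` is invariant under the right regular action
`R(b) : x ↦ x·b⁻¹` on `ℂ[B_ψ]`, and the trace of `R(b)` restricted to `V_Ω` equals
`#Ω · χ(b)` if `b ∈ Stab(χ)` and `0` otherwise. -/
theorem character_formula {A C : Type*} [AddCommGroup A] [AddCommGroup C]
    [Fintype A] [Fintype C] [Group (A × C)]
    (hA : Odd (Fintype.card A)) (hC : Odd (Fintype.card C))
    (half : A → A) (hhalf : ∀ a : A, half a + half a = a)
    (ψ : C → C → A) (hψ : IsCocycle ψ) (heq : Equalized ψ)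
    (hmul : ∀ x y : A × C, x * y = (x.1 + y.1 + ψ x.2 y.2, x.2 + y.2))
    (Ω : Set (A × C → ℂˣ)) (hΩ : IsCoadjointOrbit half ψ Ω)
    (χ : A × C → ℂˣ) (hχ : χ ∈ Ω) (b : A × C) :
    ∃ hb : ∀ x ∈ Vorb Ω,
        (LinearMap.mulRight ℂ (MonoidAlgebra.single b⁻¹ (1 : ℂ))) x ∈ Vorb Ω,
      (coact ψ b χ = χ →
        LinearMap.trace ℂ (Vorb Ω)
            ((LinearMap.mulRight ℂ (MonoidAlgebra.single b⁻¹ (1 : ℂ))).restrict hb) =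
          (Nat.card Ω : ℂ) * (χ b : ℂ)) ∧
      (coact ψ b χ ≠ χ →
        LinearMap.trace ℂ (Vorb Ω)
            ((LinearMap.mulRight ℂ (MonoidAlgebra.single b⁻¹ (1 : ℂ))).restrict hb) =
          0) :=
  character_formula_general hC half hhalf ψ hψ heq hmul Ω hΩ χ hχ b
end
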